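/- Let G be a finite group with exactly three involutions, not all pairs of which commute. Then either G ≅ S₃, or the power graph of G has a perfect matching. -/

import Mathlib

/-!
Let `I` be the set of involutions and `Z` its centralizer, the kernel of the conjugation action
`G → Sym(I) ≅ S₃`. If `Z` is trivial, `G` embeds in `S₃`; having even order and at least three
elements, it is all of `S₃`.

Otherwise no two involutions commute (commuting `x ≠ y` would force `I = {x, y, xy}`, a commuting
set), so `Z` contains no involution and has an element `z ≠ 1` of odd order. In the power graph
every `x ≠ x⁻¹` is adjacent to `x⁻¹`; inversion fixes only `1` and the involutions `s, t, u`. These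
four are absorbed by rematching the inversion-closed block `{1, s, t, u} · {z⁻¹, 1, z}`, using that
`a` and `z^{±1}` are powers of `a z^{±1}` for an involution `a` commuting with `z`.
-/

open SimpleGraph

def powerGraph (G : Type*) [Group G] : SimpleGraph G where
  Adj x y := x ≠ y ∧ ((∃ n : ℕ, y ^ n = x) ∨ (∃ n : ℕ, x ^ n = y))
  symm := ⟨fun x y ⟨h, hp⟩ => ⟨h.symm, hp.symm⟩⟩
  loopless := ⟨fun x ⟨h, _⟩ => h rfl⟩

noncomputable def matchingNumber {V : Type*} (Γ : SimpleGraph V) : ℕ :=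
  sSup {n | ∃ M : Γ.Subgraph, M.IsMatching ∧ M.edgeSet.ncard = n}

def hasPerfectMatching {V : Type*} (Γ : SimpleGraph V) : Prop :=
  ∃ M : Γ.Subgraph, M.IsPerfectMatching

theorem SimpleGraph.exists_isPerfectMatching_of_involutive {V : Type*} {Γ : SimpleGraph V}
    {σ : V → V} (hσ : Function.Involutive σ) (hadj : ∀ v, Γ.Adj v (σ v)) :
    ∃ M : Γ.Subgraph, M.IsPerfectMatching := by
  refine ⟨{ verts := Set.univ
            Adj := fun v w => w = σ v
            adj_sub := by rintro v w rfl; exact hadj v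
            edge_vert := fun _ => Set.mem_univ _
            symm := ⟨fun v w h => by rw [h, hσ]⟩ }, ?_⟩
  rw [Subgraph.isPerfectMatching_iff]
  exact fun v => ⟨σ v, rfl, fun w h => h⟩

theorem Function.Involutive.extend {α β : Type*} {f : α → β} (hf : Function.Injective f)
    {g : α → α} (hg : Function.Involutive g) {h : β → β} (hh : Function.Involutive h)
    (hrange : ∀ a, h (f a) ∈ Set.range f) :
    Function.Involutive (Function.extend f (f ∘ g) h) := by
  intro b
  by_cases hb : ∃ a, f a = b
  · obtain ⟨a, rfl⟩ := hb
    simp only [hf.extend_apply, Function.comp_apply, hg a]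
  · have hhb : ¬∃ a, f a = h b := by
      rintro ⟨a, ha⟩
      obtain ⟨a', ha'⟩ := hrange a
      exact hb ⟨a', by rw [ha', ha, hh]⟩
    rw [Function.extend_apply' _ _ _ hb, Function.extend_apply' _ _ _ hhb, hh]

section PowerGraph

variable {G : Type*} [Group G]

theorem powerGraph_adj_of_pow_eq {x y : G} (hxy : x ≠ y) {n : ℕ} (h : x ^ n = y) :
    (powerGraph G).Adj x y :=
  ⟨hxy, Or.inr ⟨n, h⟩⟩

theorem powerGraph_adj_one {x : G} (hx : x ≠ 1) : (powerGraph G).Adj x 1 :=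
  powerGraph_adj_of_pow_eq hx (pow_zero x)

theorem powerGraph_adj_inv [Finite G] {x : G} (hx : x ≠ x⁻¹) : (powerGraph G).Adj x x⁻¹ := by
  obtain ⟨n, hn⟩ := Submonoid.mem_powers_iff _ _ |>.mp <|
    mem_powers_iff_mem_zpowers.mpr (inv_mem (Subgroup.mem_zpowers x))
  exact powerGraph_adj_of_pow_eq hx hn

variable {a w : G}

theorem Commute.mul_pow_orderOf_eq (hc : Commute a w) (ha : a ^ 2 = 1) (hw : Odd (orderOf w)) :
    (a * w) ^ orderOf w = a := by
  obtain ⟨k, hk⟩ := hw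
  rw [hc.mul_pow, pow_orderOf_eq_one, mul_one, hk, pow_succ, pow_mul, ha, one_pow, one_mul]

theorem Commute.mul_pow_orderOf_add_one_eq (hc : Commute a w) (ha : a ^ 2 = 1)
    (hw : Odd (orderOf w)) : (a * w) ^ (orderOf w + 1) = w := by
  rw [pow_succ, hc.mul_pow_orderOf_eq ha hw, ← mul_assoc, ← pow_two, ha, one_mul]

theorem powerGraph_adj_mul_left (hc : Commute a w) (ha : a ^ 2 = 1) (hw : Odd (orderOf w))
    (hw1 : w ≠ 1) : (powerGraph G).Adj (a * w) a :=
  powerGraph_adj_of_pow_eq (by simpa using hw1) (hc.mul_pow_orderOf_eq ha hw)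

theorem powerGraph_adj_mul_right (hc : Commute a w) (ha : a ^ 2 = 1) (hw : Odd (orderOf w))
    (ha1 : a ≠ 1) : (powerGraph G).Adj (a * w) w :=
  powerGraph_adj_of_pow_eq (by simpa using ha1) (hc.mul_pow_orderOf_add_one_eq ha hw)

end PowerGraph

theorem odd_orderOf_of_forall_orderOf_ne_two {G : Type*} [Group G] [Finite G] {H : Subgroup G}
    (hH : ∀ x ∈ H, orderOf x ≠ 2) {z : G} (hz : z ∈ H) : Odd (orderOf z) := by
  rw [← Nat.not_even_iff_odd, even_iff_two_dvd]
  intro h2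
  exact hH _ (pow_mem hz _) (orderOf_pow_orderOf_div (orderOf_pos z).ne' h2)

def involutions (G : Type*) [Group G] : Set G := {x | orderOf x = 2}

section Involutions

variable {G : Type*} [Group G]

@[simp]
theorem mem_involutions {x : G} : x ∈ involutions G ↔ orderOf x = 2 := Iff.rfl

theorem sq_eq_one_of_mem_involutions {x : G} (hx : x ∈ involutions G) : x ^ 2 = 1 :=
  hx ▸ pow_orderOf_eq_one x

theorem ne_one_of_mem_involutions {x : G} (hx : x ∈ involutions G) : x ≠ 1 := by
  rintro rfl
  simp at hx

variable (G) in
def conjInvolutions : G →* Equiv.Perm (involutions G) where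
  toFun g := (MulAut.conj g).toEquiv.subtypeEquiv fun x => by
    rw [MulEquiv.toEquiv_eq_coe, MulEquiv.coe_toEquiv, mem_involutions, mem_involutions,
      MulEquiv.orderOf_eq]
  map_one' := by ext; simp
  map_mul' g h := by ext; simp [mul_assoc]

theorem ker_conjInvolutions :
    (conjInvolutions G).ker = Subgroup.centralizer (involutions G) := by
  ext g
  simp only [MonoidHom.mem_ker, Equiv.ext_iff, Subtype.ext_iff, Subgroup.mem_centralizer_iff]
  simp [conjInvolutions, eq_mul_inv_iff_mul_eq, eq_comm]

theorem nonempty_mulEquiv_perm_fin_three [Finite G] (h3 : (involutions G).ncard = 3)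
    (hZ : Subgroup.centralizer (involutions G) = ⊥) : Nonempty (G ≃* Equiv.Perm (Fin 3)) := by
  have hinj : Function.Injective (conjInvolutions G) := by
    rw [← MonoidHom.ker_eq_bot_iff, ker_conjInvolutions, hZ]
  have hI : Nat.card (involutions G) = 3 := by rwa [Nat.card_coe_set_eq]
  have hperm : Nat.card (Equiv.Perm (involutions G)) = 6 := by rw [Nat.card_perm, hI]; rfl
  have hdvd : Nat.card G ∣ 6 := hperm ▸ Subgroup.card_dvd_of_injective _ hinj
  obtain ⟨s, hs⟩ := Set.nonempty_of_ncard_ne_zero (h3 ▸ three_ne_zero)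
  have heven : 2 ∣ Nat.card G := hs ▸ orderOf_dvd_natCard s
  have hge : 3 ≤ Nat.card G := h3 ▸ Set.ncard_le_card _
  have hcard : Nat.card G = 6 := by
    have := Nat.le_of_dvd (by norm_num) hdvd
    interval_cases h : Nat.card G <;> omega
  have hbij := (Nat.bijective_iff_injective_and_card _).mpr ⟨hinj, hcard.trans hperm.symm⟩
  exact ⟨(MulEquiv.ofBijective _ hbij).trans
    ((Finite.equivFin _).trans (finCongr hI)).permCongrHom⟩

theorem involutions_pairwise_not_commute [Finite G] (h3 : (involutions G).ncard = 3) {a b : G}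
    (ha : a ∈ involutions G) (hb : b ∈ involutions G) (hab : ¬Commute a b) :
    (involutions G).Pairwise fun x y => ¬Commute x y := by
  intro x hx y hy hxy hc
  have hnew := mul_notMem_of_orderOf_eq_two hx hy hxy
  simp only [Set.mem_insert_iff, Set.mem_singleton_iff, not_or] at hnew
  have hxy2 : x * y ∈ involutions G :=
    orderOf_eq_prime (by rw [hc.mul_pow, sq_eq_one_of_mem_involutions hx,
      sq_eq_one_of_mem_involutions hy, one_mul]) hnew.2.2
  have hI : involutions G = {x, y, x * y} := by
    refine (Set.eq_of_subset_of_ncard_le ?_ ?_ (Set.toFinite _)).symm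
    · simp [Set.insert_subset_iff, hx, hy, hxy2]
    · rw [h3, Set.ncard_eq_three.mpr ⟨x, y, x * y, hxy, Ne.symm hnew.1, Ne.symm hnew.2.1, rfl⟩]
  rw [hI] at ha hb
  apply hab
  rcases ha with rfl | rfl | rfl <;> rcases hb with rfl | rfl | rfl <;>
    simp [hc, hc.symm, Commute.mul_left, Commute.mul_right]

theorem zpow_signType_injective {z : G} (hz : 2 < orderOf z) :
    Function.Injective fun k : SignType => z ^ (k : ℤ) := by
  intro k l h
  have hdvd := (zpow_eq_zpow_iff_modEq.mp h).dvd
  have h0 : (l : ℤ) - k = 0 :=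
    Int.eq_zero_of_abs_lt_dvd hdvd (by cases k <;> cases l <;> simp [-orderOf_pos_iff] <;> omega)
  cases k <;> cases l <;> simp at h0 ⊢

theorem orderOf_ne_two_of_mem_centralizer
    (hpair : (involutions G).Pairwise fun x y => ¬Commute x y) {s t z : G}
    (hs : s ∈ involutions G) (ht : t ∈ involutions G) (hst : s ≠ t)
    (hz : z ∈ Subgroup.centralizer (involutions G)) : orderOf z ≠ 2 := by
  intro hz2
  have hcomm : ∀ x ∈ involutions G, x = z := fun x hx =>
    hpair.eq hx hz2 (not_not.mpr (Subgroup.mem_centralizer_iff.mp hz x hx))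
  exact hst ((hcomm s hs).trans (hcomm t ht).symm)

theorem eq_of_mul_eq_mul_of_mem_centralizer
    (hpair : (involutions G).Pairwise fun x y => ¬Commute x y) {s t : G}
    (hs : s ∈ involutions G) (ht : t ∈ involutions G) (hst : s ≠ t) {a b c d : G}
    (ha : a = 1 ∨ a ∈ involutions G) (hb : b = 1 ∨ b ∈ involutions G)
    (hc : c ∈ Subgroup.centralizer (involutions G)) (hd : d ∈ Subgroup.centralizer (involutions G))
    (h : a * c = b * d) : a = b := by
  have hba : b⁻¹ * a ∈ Subgroup.centralizer (involutions G) := by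
    rw [show b⁻¹ * a = d * c⁻¹ by
      rw [inv_mul_eq_iff_eq_mul, ← mul_assoc, ← h, mul_inv_cancel_right]]
    exact mul_mem hd (inv_mem hc)
  have hnotZ : ∀ x ∈ involutions G, x ∉ Subgroup.centralizer (involutions G) :=
    fun x hx hxZ => orderOf_ne_two_of_mem_centralizer hpair hs ht hst hxZ hx
  rcases ha with rfl | ha <;> rcases hb with rfl | hb
  · rfl
  · exact absurd (by simpa using hba) (hnotZ b hb)
  · exact absurd (by simpa using hba) (hnotZ a ha)
  · refine hpair.eq ha hb (not_not.mpr ?_)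
    have haa : a * a = 1 := by rw [← pow_two, sq_eq_one_of_mem_involutions ha]
    have hcomm : a * (b * a) = b * a * a := by
      simpa [inv_eq_self_of_orderOf_eq_two hb] using Subgroup.mem_centralizer_iff.mp hba a ha
    calc a * b = a * (b * a) * a := by simp only [mul_assoc, haa, mul_one]
      _ = b * a := by rw [hcomm]; simp only [mul_assoc, haa, mul_one]

def involutionGrid (s t u z : G) (i : Fin 4 × SignType) : G :=
  ![1, s, t, u] i.1 * z ^ (i.2 : ℤ)

/-- On `involutionGrid s t u z` this matches `1 ↔ u`, `s ↔ s z`, `s z⁻¹ ↔ z⁻¹`, `t ↔ t z⁻¹`,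
`t z ↔ z` and `u z ↔ u z⁻¹`. -/
def gridPairing : Fin 4 × SignType → Fin 4 × SignType
  | (0, .zero) => (3, .zero)
  | (3, .zero) => (0, .zero)
  | (1, .zero) => (1, .pos)
  | (1, .pos) => (1, .zero)
  | (1, .neg) => (0, .neg)
  | (0, .neg) => (1, .neg)
  | (2, .zero) => (2, .neg)
  | (2, .neg) => (2, .zero)
  | (2, .pos) => (0, .pos)
  | (0, .pos) => (2, .pos)
  | (3, .pos) => (3, .neg)
  | (3, .neg) => (3, .pos)

theorem gridPairing_involutive : Function.Involutive gridPairing := by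
  unfold Function.Involutive; decide

variable {s t u z : G}

theorem involutionGrid_row (hs : s ∈ involutions G) (ht : t ∈ involutions G)
    (hu : u ∈ involutions G) (r : Fin 4) :
    ![1, s, t, u] r = 1 ∨ ![1, s, t, u] r ∈ involutions G := by
  fin_cases r <;> simp [hs, ht, hu]

theorem involutionGrid_injective (hpair : (involutions G).Pairwise fun x y => ¬Commute x y)
    (hs : s ∈ involutions G) (ht : t ∈ involutions G) (hu : u ∈ involutions G)
    (hst : s ≠ t) (hsu : s ≠ u) (htu : t ≠ u)
    (hz : z ∈ Subgroup.centralizer (involutions G)) (hz2 : 2 < orderOf z) :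
    Function.Injective (involutionGrid s t u z) := by
  have hrow_inj : Function.Injective ![1, s, t, u] := by
    have := ne_one_of_mem_involutions hs
    have := ne_one_of_mem_involutions ht
    have := ne_one_of_mem_involutions hu
    intro i j h
    fin_cases i <;> fin_cases j <;> simp_all [eq_comm]
  rintro ⟨r, k⟩ ⟨r', k'⟩ h
  have hrow := involutionGrid_row hs ht hu
  obtain rfl := hrow_inj <| eq_of_mul_eq_mul_of_mem_centralizer hpair hs ht hst (hrow r)
    (hrow r') (zpow_mem hz _) (zpow_mem hz _) h
  exact congrArg _ (zpow_signType_injective hz2 (mul_left_cancel h))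

theorem involutionGrid_inv (hs : s ∈ involutions G) (ht : t ∈ involutions G)
    (hu : u ∈ involutions G) (hz : z ∈ Subgroup.centralizer (involutions G))
    (r : Fin 4) (k : SignType) :
    (involutionGrid s t u z (r, k))⁻¹ = involutionGrid s t u z (r, -k) := by
  simp only [involutionGrid, mul_inv_rev, SignType.coe_neg, zpow_neg]
  rcases involutionGrid_row hs ht hu r with h | h
  · simp [h]
  · rw [inv_eq_self_of_orderOf_eq_two h]
    have hc : Commute (![1, s, t, u] r) (z ^ (k : ℤ)) :=
      Subgroup.mem_centralizer_iff.mp (zpow_mem hz k) _ h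
    exact hc.inv_right.eq.symm

theorem powerGraph_adj_involutionGrid_gridPairing [Finite G] (hs : s ∈ involutions G)
    (ht : t ∈ involutions G) (hu : u ∈ involutions G)
    (hz : z ∈ Subgroup.centralizer (involutions G)) (hz1 : z ≠ 1) (hzodd : Odd (orderOf z))
    (he : Function.Injective (involutionGrid s t u z)) (i : Fin 4 × SignType) :
    (powerGraph G).Adj (involutionGrid s t u z i) (involutionGrid s t u z (gridPairing i)) := by
  have hcomm : ∀ {x}, x ∈ involutions G → Commute x z := fun hx =>
    Subgroup.mem_centralizer_iff.mp hz _ hx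
  have hzodd' : Odd (orderOf z⁻¹) := by rwa [orderOf_inv]
  have h1u : (powerGraph G).Adj u 1 := powerGraph_adj_one (ne_one_of_mem_involutions hu)
  have hszs : (powerGraph G).Adj (s * z) s :=
    powerGraph_adj_mul_left (hcomm hs) (sq_eq_one_of_mem_involutions hs) hzodd hz1
  have hszz : (powerGraph G).Adj (s * z⁻¹) z⁻¹ :=
    powerGraph_adj_mul_right (hcomm hs).inv_right (sq_eq_one_of_mem_involutions hs) hzodd'
      (ne_one_of_mem_involutions hs)
  have htzt : (powerGraph G).Adj (t * z⁻¹) t :=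
    powerGraph_adj_mul_left (hcomm ht).inv_right (sq_eq_one_of_mem_involutions ht) hzodd'
      (inv_ne_one.mpr hz1)
  have htzz : (powerGraph G).Adj (t * z) z :=
    powerGraph_adj_mul_right (hcomm ht) (sq_eq_one_of_mem_involutions ht) hzodd
      (ne_one_of_mem_involutions ht)
  have huzz : (powerGraph G).Adj (u * z) (u * z⁻¹) := by
    have hinv : (u * z)⁻¹ = u * z⁻¹ := by
      simpa [involutionGrid] using involutionGrid_inv hs ht hu hz 3 .pos
    have hne' : u * z ≠ u * z⁻¹ := by
      simpa [involutionGrid] using he.ne (show ((3 : Fin 4), SignType.pos) ≠ (3, .neg) by decide)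
    rw [← hinv]
    exact powerGraph_adj_inv (by rwa [hinv])
  rcases i with ⟨r, k⟩
  fin_cases r <;> cases k <;> simp [involutionGrid, gridPairing] <;>
    first | assumption | exact SimpleGraph.Adj.symm ‹_›

theorem hasPerfectMatching_powerGraph_of_mem_centralizer [Finite G]
    (hI : involutions G = {s, t, u}) (hst : s ≠ t) (hsu : s ≠ u) (htu : t ≠ u)
    (hpair : (involutions G).Pairwise fun x y => ¬Commute x y)
    (hz : z ∈ Subgroup.centralizer (involutions G)) (hz1 : z ≠ 1) (hzodd : Odd (orderOf z)) :
    hasPerfectMatching (powerGraph G) := by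
  have hs : s ∈ involutions G := by simp [hI]
  have ht : t ∈ involutions G := by simp [hI]
  have hu : u ∈ involutions G := by simp [hI]
  have hz2 : 2 < orderOf z := by
    obtain ⟨k, hk⟩ := hzodd
    have : orderOf z ≠ 1 := by rwa [Ne, orderOf_eq_one_iff]
    omega
  set e := involutionGrid s t u z
  have he : Function.Injective e :=
    involutionGrid_injective hpair hs ht hu hst hsu htu hz hz2
  have hout : ∀ x, (¬∃ i, e i = x) → (powerGraph G).Adj x x⁻¹ := by
    intro x hx
    refine powerGraph_adj_inv fun hxx => hx ?_
    have hx1 : x ≠ 1 := fun h => hx ⟨(0, 0), by simp [e, involutionGrid, h]⟩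
    have hxI : x ∈ involutions G :=
      orderOf_eq_prime (by rw [pow_two]; nth_rw 2 [hxx]; exact mul_inv_cancel x) hx1
    rw [hI] at hxI
    rcases hxI with rfl | rfl | rfl
    exacts [⟨(1, 0), by simp [e, involutionGrid]⟩, ⟨(2, 0), by simp [e, involutionGrid]⟩,
      ⟨(3, 0), by simp [e, involutionGrid]⟩]
  have hσ := Function.Involutive.extend he gridPairing_involutive inv_involutive
    fun i => ⟨(i.1, -i.2), (involutionGrid_inv hs ht hu hz i.1 i.2).symm⟩
  refine SimpleGraph.exists_isPerfectMatching_of_involutive hσ fun x => ?_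
  by_cases hx : ∃ i, e i = x
  · obtain ⟨i, rfl⟩ := hx
    rw [he.extend_apply]
    exact powerGraph_adj_involutionGrid_gridPairing hs ht hu hz hz1 hzodd he i
  · rw [Function.extend_apply' _ _ _ hx]
    exact hout x hx

end Involutions

theorem stmt13 (G : Type*) [Group G] [Fintype G]
    (h3 : {t : G | orderOf t = 2}.ncard = 3)
    (hnc : ¬ ∀ s t : G, orderOf s = 2 → orderOf t = 2 → s * t = t * s) :
    Nonempty (G ≃* Equiv.Perm (Fin 3)) ∨ hasPerfectMatching (powerGraph G) := by
  change (involutions G).ncard = 3 at h3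
  obtain ⟨s, t, u, hst, hsu, htu, hI⟩ := Set.ncard_eq_three.mp h3
  rcases (Subgroup.centralizer (involutions G)).bot_or_exists_ne_one with hZ | ⟨z, hz, hz1⟩
  · exact Or.inl (nonempty_mulEquiv_perm_fin_three h3 hZ)
  push Not at hnc
  obtain ⟨a, b, ha, hb, hab⟩ := hnc
  have hpair := involutions_pairwise_not_commute h3 ha hb hab
  have hs : s ∈ involutions G := by simp [hI]
  have ht : t ∈ involutions G := by simp [hI]
  have hzodd : Odd (orderOf z) := odd_orderOf_of_forall_orderOf_ne_two
    (fun x hx => orderOf_ne_two_of_mem_centralizer hpair hs ht hst hx) hz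
  exact Or.inr (hasPerfectMatching_powerGraph_of_mem_centralizer hI hst hsu htu hpair hz hz1 hzodd)
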